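/- For every locally injective simplicial map φ : ℙ¹(ℚ) → ℙ¹(ℚ) of the Farey graph F there exists g ∈ GL(2,ℤ) such that φ(x) = g • x for all x ∈ ℙ¹(ℚ), and g is unique up to sign (if g′ also has this property then g′ = g or g′ = −g). (This is the paper's Corollary 1.2 — simplicial rigidity of the curve complex for locally injective simplicial self-maps — in the case of the surfaces S₁,₁ and S₀,₄, whose curve complex is the Farey complex.) -/

import Mathlib

/-!
A locally injective simplicial map `φ` sends the triangle `∞, 0, 1` to a triangle, and every
triangle of the Farey graph is the image of that one under some `g ∈ GL(2,ℤ)`; so `g⁻¹ ∘ φ` fixes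
`∞, 0, 1`. The two triangles on an edge `[a:b], [c:d]` with `ad - bc = 1` have apexes
`[a+c:b+d]` and `[a-c:b-d]`. If a locally injective simplicial map fixes the edge and one apex, it
sends the other apex to a common neighbour of the edge, i.e. to one of the two apexes, and local
injectivity at `[a:b]` excludes the fixed one. By Euclid's algorithm every primitive vector with
`|e| + |f| > 2` is the far apex over an edge whose three vertices have smaller `|·| + |·|`, so by
induction `g⁻¹ ∘ φ` is the identity. Finally an element acting trivially fixes `∞, 0, 1`, which
forces it to be `±1`.
-/

/-- The projective line over `ℚ`. -/
abbrev P1Q := Projectivization ℚ (Fin 2 → ℚ)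

/-- The point of `ℙ¹(ℚ)` with homogeneous integer coordinates `[a : b]`
(a junk value is returned when `a = b = 0`, which never occurs for primitive vectors). -/
def fareyMk (a b : ℤ) : P1Q :=
  if h : a = 0 ∧ b = 0 then
    Projectivization.mk ℚ ![1, 0] (by
      intro hv
      have h0 := congrFun hv 0
      simp at h0)
  else
    Projectivization.mk ℚ ![(a : ℚ), (b : ℚ)] (by
      intro hv
      have h0 : (a : ℚ) = 0 := by simpa using congrFun hv 0
      have h1 : (b : ℚ) = 0 := by simpa using congrFun hv 1
      exact h ⟨by exact_mod_cast h0, by exact_mod_cast h1⟩)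

/-- Two points of `ℙ¹(ℚ)` are related if they are represented by primitive integer
vectors `(a,b)` and `(c,d)` with `|ad - bc| = 1`. -/
def fareyRel (x y : P1Q) : Prop :=
  ∃ a b c d : ℤ, Int.gcd a b = 1 ∧ Int.gcd c d = 1 ∧ |a * d - b * c| = 1 ∧
    x = fareyMk a b ∧ y = fareyMk c d

/-- The Farey graph on `ℙ¹(ℚ)`. -/
def fareyGraph : SimpleGraph P1Q := SimpleGraph.fromRel fareyRel

/-- The rational matrix associated to an element of `GL(2,ℤ)`. -/
def matQ (g : GL (Fin 2) ℤ) : Matrix (Fin 2) (Fin 2) ℚ :=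
  (g : Matrix (Fin 2) (Fin 2) ℤ).map ((↑) : ℤ → ℚ)

lemma matQ_mul (g h : GL (Fin 2) ℤ) : matQ (g * h) = matQ g * matQ h := by
  simpa [matQ] using
    (RingHom.mapMatrix (Int.castRingHom ℚ)).map_mul (g : Matrix (Fin 2) (Fin 2) ℤ) h

lemma matQ_one : matQ 1 = (1 : Matrix (Fin 2) (Fin 2) ℚ) := by
  simpa [matQ] using (RingHom.mapMatrix (Int.castRingHom ℚ)).map_one

lemma mulVecLin_matQ_injective (g : GL (Fin 2) ℤ) :
    Function.Injective ((matQ g).mulVecLin) := by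
  have key : ∀ v : Fin 2 → ℚ, (matQ g⁻¹).mulVecLin ((matQ g).mulVecLin v) = v := by
    intro v
    rw [Matrix.mulVecLin_apply, Matrix.mulVecLin_apply, Matrix.mulVec_mulVec,
      ← matQ_mul, inv_mul_cancel, matQ_one, Matrix.one_mulVec]
  exact Function.LeftInverse.injective key

/-- The action of `GL(2,ℤ)` on `ℙ¹(ℚ)` by linear action on representative vectors. -/
def fareyAct (g : GL (Fin 2) ℤ) (x : P1Q) : P1Q :=
  Projectivization.map ((matQ g).mulVecLin) (mulVecLin_matQ_injective g) x

/-- A map `φ` is simplicial on `Y ⊆ ℙ¹(ℚ)` with respect to the Farey graph. -/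
def FareySimplicial (Y : Set P1Q) (φ : P1Q → P1Q) : Prop :=
  ∀ y ∈ Y, ∀ z ∈ Y, fareyGraph.Adj y z → fareyGraph.Adj (φ y) (φ z)

/-- The closed star of `y` in `Y`: the set `{y} ∪ {z ∈ Y : z adjacent to y}`. -/
def fareyClosedStar (Y : Set P1Q) (y : P1Q) : Set P1Q :=
  {z ∈ Y | z = y ∨ fareyGraph.Adj y z}

/-- A map `φ` is locally injective on `Y ⊆ ℙ¹(ℚ)` with respect to the Farey graph. -/
def FareyLocallyInjective (Y : Set P1Q) (φ : P1Q → P1Q) : Prop :=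
  ∀ y ∈ Y, Set.InjOn φ (fareyClosedStar Y y)

lemma intCast_vec_ne_zero {a b : ℤ} (h : a ≠ 0 ∨ b ≠ 0) : ![(a : ℚ), (b : ℚ)] ≠ 0 := by
  simpa [funext_iff, Fin.forall_fin_two, or_iff_not_imp_left] using h

lemma fareyMk_eq_mk {a b : ℤ} (h : a ≠ 0 ∨ b ≠ 0) :
    fareyMk a b = Projectivization.mk ℚ ![(a : ℚ), (b : ℚ)] (intCast_vec_ne_zero h) := by
  rw [fareyMk, dif_neg (not_and_or.mpr h)]

@[simp]
lemma fareyMk_neg (a b : ℤ) : fareyMk (-a) (-b) = fareyMk a b := by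
  by_cases h : a = 0 ∧ b = 0
  · simp [h.1, h.2]
  rw [fareyMk_eq_mk (not_and_or.mp h), fareyMk_eq_mk (by simpa using not_and_or.mp h),
    Projectivization.mk_eq_mk_iff']
  exact ⟨-1, by ext i; fin_cases i <;> simp⟩

lemma mul_eq_mul_of_fareyMk_eq {a b c d : ℤ} (h : fareyMk a b = fareyMk c d) :
    a * d = b * c := by
  by_cases hab : a = 0 ∧ b = 0
  · simp [hab.1, hab.2]
  by_cases hcd : c = 0 ∧ d = 0
  · simp [hcd.1, hcd.2]
  rw [fareyMk_eq_mk (not_and_or.mp hab), fareyMk_eq_mk (not_and_or.mp hcd),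
    Projectivization.mk_eq_mk_iff'] at h
  obtain ⟨t, ht⟩ := h
  have ha : t * c = a := by simpa using congrFun ht 0
  have hb : t * d = b := by simpa using congrFun ht 1
  have : (a * d : ℚ) = b * c := by rw [← ha, ← hb]; ring
  exact_mod_cast this

lemma exists_eq_mul_of_mul_eq_mul {R : Type*} [CommRing R] {a b c d : R} (h : IsCoprime a b)
    (hx : a * d = b * c) : ∃ k, c = k * a ∧ d = k * b := by
  obtain ⟨u, v, huv⟩ := h
  exact ⟨u * c + v * d, by linear_combination (-c) * huv - v * hx,
    by linear_combination (-d) * huv + u * hx⟩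

lemma eq_or_eq_neg_of_fareyMk_eq {a b c d : ℤ} (hab : IsCoprime a b) (hcd : IsCoprime c d)
    (h : fareyMk a b = fareyMk c d) : a = c ∧ b = d ∨ a = -c ∧ b = -d := by
  obtain ⟨k, rfl, rfl⟩ := exists_eq_mul_of_mul_eq_mul hcd
    (by linarith [mul_eq_mul_of_fareyMk_eq h] : c * b = d * a)
  rcases Int.isUnit_iff.mp (hab.isUnit_of_dvd' (dvd_mul_right k c) (dvd_mul_right k d))
    with rfl | rfl <;> simp

lemma exists_fareyMk_eq (x : P1Q) : ∃ a b : ℤ, IsCoprime a b ∧ x = fareyMk a b := by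
  induction x using Projectivization.ind with
  | h v hv =>
  by_cases hv1 : v 1 = 0
  · have hv0 : v 0 ≠ 0 := fun hv0 => hv (by ext i; fin_cases i <;> simp [hv0, hv1])
    refine ⟨1, 0, isCoprime_one_left, ?_⟩
    rw [fareyMk_eq_mk (by simp), Projectivization.mk_eq_mk_iff']
    exact ⟨v 0, by ext i; fin_cases i <;> simp [hv1]⟩
  · set p := v 0 / v 1
    refine ⟨p.num, p.den, Rat.isCoprime_num_den p, ?_⟩
    rw [fareyMk_eq_mk (Or.inr (by exact_mod_cast p.den_nz)), Projectivization.mk_eq_mk_iff']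
    refine ⟨v 1 / p.den, ?_⟩
    ext i
    fin_cases i
    · simp [div_mul_eq_mul_div, mul_div_assoc, Rat.num_div_den, p, mul_div_cancel₀ _ hv1]
    · simp [p.den_nz]

lemma isCoprime_of_det_eq_one {R : Type*} [CommRing R] {a b c d : R} (h : a * d - b * c = 1) :
    IsCoprime a b :=
  ⟨d, -c, by linear_combination h⟩

lemma isCoprime_of_abs_det_eq_one {a b c d : ℤ} (h : |a * d - b * c| = 1) :
    IsCoprime a b ∧ IsCoprime c d := by
  have hsq : (a * d - b * c) * (a * d - b * c) = 1 := by rw [← abs_mul_abs_self, h, one_mul]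
  exact ⟨⟨d * (a * d - b * c), -c * (a * d - b * c), by linear_combination hsq⟩,
    ⟨-b * (a * d - b * c), a * (a * d - b * c), by linear_combination hsq⟩⟩

lemma fareyGraph_adj_fareyMk {a b c d : ℤ} (h : |a * d - b * c| = 1) :
    fareyGraph.Adj (fareyMk a b) (fareyMk c d) := by
  obtain ⟨hab, hcd⟩ := isCoprime_of_abs_det_eq_one h
  rw [fareyGraph, SimpleGraph.fromRel_adj]
  refine ⟨fun he => ?_, Or.inl ⟨a, b, c, d, Int.isCoprime_iff_gcd_eq_one.mp hab,
    Int.isCoprime_iff_gcd_eq_one.mp hcd, h, rfl, rfl⟩⟩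
  simp [mul_eq_mul_of_fareyMk_eq he] at h

lemma abs_det_eq_of_fareyMk_eq {a b c d a' b' c' d' : ℤ} (hab : IsCoprime a b)
    (hcd : IsCoprime c d) (hab' : IsCoprime a' b') (hcd' : IsCoprime c' d')
    (hx : fareyMk a b = fareyMk a' b') (hy : fareyMk c d = fareyMk c' d') :
    |a * d - b * c| = |a' * d' - b' * c'| := by
  obtain ⟨rfl, rfl⟩ | ⟨rfl, rfl⟩ := eq_or_eq_neg_of_fareyMk_eq hab hab' hx <;>
  obtain ⟨rfl, rfl⟩ | ⟨rfl, rfl⟩ := eq_or_eq_neg_of_fareyMk_eq hcd hcd' hy <;>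
  rw [abs_eq_abs] <;> first | (left; ring1) | (right; ring1)

lemma abs_det_eq_one_of_adj {a b c d : ℤ} (hab : IsCoprime a b) (hcd : IsCoprime c d)
    (h : fareyGraph.Adj (fareyMk a b) (fareyMk c d)) : |a * d - b * c| = 1 := by
  rw [fareyGraph, SimpleGraph.fromRel_adj] at h
  rcases h.2 with ⟨a', b', c', d', hab', hcd', hdet, hx, hy⟩ |
    ⟨c', d', a', b', hcd', hab', hdet, hy, hx⟩
  all_goals rw [← Int.isCoprime_iff_gcd_eq_one] at hab' hcd'
  · rw [abs_det_eq_of_fareyMk_eq hab hcd hab' hcd' hx hy, hdet]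
  · rw [abs_det_eq_of_fareyMk_eq hab hcd hab' hcd' hx hy, ← hdet, abs_eq_abs]
    right; ring

lemma eq_fareyMk_add_or_sub_of_adj {a b c d : ℤ} (h : a * d - b * c = 1) {z : P1Q}
    (hx : fareyGraph.Adj (fareyMk a b) z) (hy : fareyGraph.Adj (fareyMk c d) z) :
    z = fareyMk (a + c) (b + d) ∨ z = fareyMk (a - c) (b - d) := by
  obtain ⟨hab, hcd⟩ := isCoprime_of_abs_det_eq_one (by rw [h, abs_one] : |a * d - b * c| = 1)
  obtain ⟨e, f, hef, rfl⟩ := exists_fareyMk_eq z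
  have hm := abs_det_eq_one_of_adj hcd hef hy
  have hn := abs_det_eq_one_of_adj hab hef hx
  -- coordinates of `(e, f)` in the basis `(a, b), (c, d)`
  have he : e = (d * e - c * f) * a + (a * f - b * e) * c := by linear_combination (-e) * h
  have hf : f = (d * e - c * f) * b + (a * f - b * e) * d := by linear_combination (-f) * h
  rw [abs_sub_comm] at hm
  generalize d * e - c * f = m at hm he hf
  generalize a * f - b * e = n at hn he hf
  rcases abs_eq zero_le_one |>.mp hm with rfl | rfl <;>
  rcases abs_eq zero_le_one |>.mp hn with rfl | rfl
  · left; congr 1 <;> linarith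
  · right; congr 1 <;> linarith
  · right; rw [← fareyMk_neg]; congr 1 <;> linarith
  · left; rw [← fareyMk_neg]; congr 1 <;> linarith

lemma abs_det_eq_one {n : Type*} [Fintype n] [DecidableEq n] (g : GL n ℤ) :
    |(g : Matrix n n ℤ).det| = 1 :=
  Int.isUnit_iff_abs_eq.mp (Matrix.isUnits_det_units g)

lemma fareyAct_fareyMk (g : GL (Fin 2) ℤ) {a b : ℤ} (h : a ≠ 0 ∨ b ≠ 0) :
    fareyAct g (fareyMk a b) = fareyMk (g 0 0 * a + g 0 1 * b) (g 1 0 * a + g 1 1 * b) := by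
  have hv : (matQ g).mulVecLin ![(a : ℚ), (b : ℚ)] =
      ![((g 0 0 * a + g 0 1 * b : ℤ) : ℚ), ((g 1 0 * a + g 1 1 * b : ℤ) : ℚ)] := by
    ext i
    fin_cases i <;> simp [matQ, Matrix.mulVec, dotProduct, Fin.sum_univ_two]
  have himage : g 0 0 * a + g 0 1 * b ≠ 0 ∨ g 1 0 * a + g 1 1 * b ≠ 0 := by
    by_contra! h0
    refine (mulVecLin_matQ_injective g).ne (intCast_vec_ne_zero h) ?_
    rw [map_zero, hv, h0.1, h0.2]
    simp
  rw [fareyMk_eq_mk h, fareyMk_eq_mk himage, fareyAct, Projectivization.map_mk]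
  simp_rw [hv]

lemma fareyAct_mul (g h : GL (Fin 2) ℤ) (x : P1Q) :
    fareyAct (g * h) x = fareyAct g (fareyAct h x) := by
  induction x using Projectivization.ind with
  | h v hv => simp [fareyAct, Projectivization.map_mk, matQ_mul]

lemma fareyAct_one (x : P1Q) : fareyAct 1 x = x := by
  induction x using Projectivization.ind with
  | h v hv => simp [fareyAct, Projectivization.map_mk, matQ_one]

lemma fareyAct_inv_fareyAct (g : GL (Fin 2) ℤ) (x : P1Q) : fareyAct g⁻¹ (fareyAct g x) = x := by
  rw [← fareyAct_mul, inv_mul_cancel, fareyAct_one]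

lemma fareyAct_fareyAct_inv (g : GL (Fin 2) ℤ) (x : P1Q) : fareyAct g (fareyAct g⁻¹ x) = x := by
  rw [← fareyAct_mul, mul_inv_cancel, fareyAct_one]

lemma fareyGraph_adj_fareyAct (g : GL (Fin 2) ℤ) {x y : P1Q} (h : fareyGraph.Adj x y) :
    fareyGraph.Adj (fareyAct g x) (fareyAct g y) := by
  obtain ⟨a, b, hab, rfl⟩ := exists_fareyMk_eq x
  obtain ⟨c, d, hcd, rfl⟩ := exists_fareyMk_eq y
  rw [fareyAct_fareyMk g hab.ne_zero_or_ne_zero, fareyAct_fareyMk g hcd.ne_zero_or_ne_zero]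
  apply fareyGraph_adj_fareyMk
  calc _ = |(g : Matrix (Fin 2) (Fin 2) ℤ).det * (a * d - b * c)| := by
        rw [Matrix.det_fin_two]; ring_nf
    _ = 1 := by rw [abs_mul, abs_det_eq_one, abs_det_eq_one_of_adj hab hcd h, one_mul]

lemma FareySimplicial.fareyAct_comp {Y : Set P1Q} {φ : P1Q → P1Q} (hφ : FareySimplicial Y φ)
    (g : GL (Fin 2) ℤ) : FareySimplicial Y (fareyAct g ∘ φ) :=
  fun y hy z hz h => fareyGraph_adj_fareyAct g (hφ y hy z hz h)

lemma FareyLocallyInjective.fareyAct_comp {Y : Set P1Q} {φ : P1Q → P1Q}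
    (hφ : FareyLocallyInjective Y φ) (g : GL (Fin 2) ℤ) :
    FareyLocallyInjective Y (fareyAct g ∘ φ) :=
  fun y hy => (Function.LeftInverse.injective (fareyAct_inv_fareyAct g)).comp_injOn (hφ y hy)

lemma eq_one_or_eq_neg_one_of_fareyAct_eq_self {g : GL (Fin 2) ℤ} (h : ∀ x, fareyAct g x = x) :
    g = 1 ∨ g = -1 := by
  have hcross : ∀ a b : ℤ, IsCoprime a b →
      (g 0 0 * a + g 0 1 * b) * b = (g 1 0 * a + g 1 1 * b) * a := fun a b hab =>
    mul_eq_mul_of_fareyMk_eq ((fareyAct_fareyMk g hab.ne_zero_or_ne_zero).symm.trans (h _))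
  have h10 := hcross 1 0 isCoprime_one_left
  have h01 := hcross 0 1 isCoprime_one_right
  have h11 := hcross 1 1 isCoprime_one_left
  simp only [mul_one, mul_zero, add_zero, zero_add] at h10 h01 h11
  rw [h01, ← h10, add_zero, zero_add] at h11
  have hdet := abs_det_eq_one g
  rw [Matrix.det_fin_two, ← h10, h01, mul_zero, sub_zero, ← h11] at hdet
  rcases Int.isUnit_iff.mp (IsUnit.mul_iff.mp (Int.isUnit_iff_abs_eq.mpr hdet)).1 with hg | hg
    <;> [left; right]
  all_goals ext i j; fin_cases i <;> fin_cases j <;> simp [hg, ← h11, h01, ← h10]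

lemma exists_fareyAct_eq_of_abs_det_eq_one {a b c d : ℤ} (h : |a * d - b * c| = 1) :
    ∃ g : GL (Fin 2) ℤ, fareyAct g (fareyMk 1 0) = fareyMk a b ∧
      fareyAct g (fareyMk 0 1) = fareyMk c d ∧ fareyAct g (fareyMk 1 1) = fareyMk (a + c) (b + d) :=
  ⟨Matrix.GeneralLinearGroup.mk'' !![a, c; b, d]
    (Int.isUnit_iff_abs_eq.mpr (by rwa [Matrix.det_fin_two_of, mul_comm c])),
    by simp [fareyAct_fareyMk], by simp [fareyAct_fareyMk], by simp [fareyAct_fareyMk]⟩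

lemma exists_fareyMk_eq_of_adj {x y : P1Q} (h : fareyGraph.Adj x y) :
    ∃ a b c d : ℤ, a * d - b * c = 1 ∧ x = fareyMk a b ∧ y = fareyMk c d := by
  obtain ⟨a, b, hab, rfl⟩ := exists_fareyMk_eq x
  obtain ⟨c, d, hcd, rfl⟩ := exists_fareyMk_eq y
  rcases abs_eq zero_le_one |>.mp (abs_det_eq_one_of_adj hab hcd h) with hdet | hdet
  · exact ⟨a, b, c, d, hdet, rfl, rfl⟩
  · exact ⟨a, b, -c, -d, by linarith, rfl, (fareyMk_neg c d).symm⟩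

lemma exists_fareyAct_eq_of_isTriangle {x y z : P1Q} (hxy : fareyGraph.Adj x y)
    (hxz : fareyGraph.Adj x z) (hyz : fareyGraph.Adj y z) :
    ∃ g : GL (Fin 2) ℤ, fareyAct g (fareyMk 1 0) = x ∧ fareyAct g (fareyMk 0 1) = y ∧
      fareyAct g (fareyMk 1 1) = z := by
  obtain ⟨a, b, c, d, hdet, rfl, rfl⟩ := exists_fareyMk_eq_of_adj hxy
  rcases eq_fareyMk_add_or_sub_of_adj hdet hxz hyz with rfl | rfl
  · exact exists_fareyAct_eq_of_abs_det_eq_one (by rw [hdet, abs_one])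
  · simpa [sub_eq_add_neg] using
      exists_fareyAct_eq_of_abs_det_eq_one (a := a) (b := b) (c := -c) (d := -d)
        (by rw [← abs_one, ← hdet, ← abs_neg]; ring_nf)

lemma eq_or_eq_neg_of_fareyAct_eq {g g' : GL (Fin 2) ℤ}
    (h : ∀ x, fareyAct g' x = fareyAct g x) : g' = g ∨ g' = -g := by
  rcases eq_one_or_eq_neg_one_of_fareyAct_eq_self (g := g⁻¹ * g')
    (fun x => by rw [fareyAct_mul, h, fareyAct_inv_fareyAct]) with h1 | h1
  · exact .inl (inv_mul_eq_one.mp h1).symm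
  · rw [inv_mul_eq_iff_eq_mul, mul_neg_one] at h1
    exact .inr h1

lemma apply_fareyMk_add_eq_self {ψ : P1Q → P1Q} (hs : FareySimplicial Set.univ ψ)
    (hl : FareyLocallyInjective Set.univ ψ) {a b c d : ℤ} (h : a * d - b * c = 1)
    (hx : ψ (fareyMk a b) = fareyMk a b) (hy : ψ (fareyMk c d) = fareyMk c d)
    (hz : ψ (fareyMk (a - c) (b - d)) = fareyMk (a - c) (b - d)) :
    ψ (fareyMk (a + c) (b + d)) = fareyMk (a + c) (b + d) := by
  have hxw : fareyGraph.Adj (fareyMk a b) (fareyMk (a + c) (b + d)) :=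
    fareyGraph_adj_fareyMk (by rw [← abs_one, ← h]; ring_nf)
  have hyw : fareyGraph.Adj (fareyMk c d) (fareyMk (a + c) (b + d)) :=
    fareyGraph_adj_fareyMk (by rw [← abs_one, ← h, ← abs_neg]; ring_nf)
  have hxz : fareyGraph.Adj (fareyMk a b) (fareyMk (a - c) (b - d)) :=
    fareyGraph_adj_fareyMk (by rw [← abs_one, ← h, ← abs_neg]; ring_nf)
  have hzw : fareyMk (a - c) (b - d) ≠ fareyMk (a + c) (b + d) := fun he => by
    have := mul_eq_mul_of_fareyMk_eq he
    linarith
  rcases eq_fareyMk_add_or_sub_of_adj h (hx ▸ hs _ trivial _ trivial hxw)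
    (hy ▸ hs _ trivial _ trivial hyw) with hw | hw
  · exact hw
  · exact absurd (hl _ trivial ⟨trivial, .inr hxz⟩ ⟨trivial, .inr hxw⟩ (hz.trans hw.symm)) hzw

lemma exists_mul_sub_mul_eq_one_of_lt {e f : ℤ} (hf : 0 < f) (hfe : f < e) (h : IsCoprime e f) :
    ∃ a b : ℤ, a * f - b * e = 1 ∧ 0 < a ∧ a < e ∧ 0 ≤ b ∧ b < f := by
  obtain ⟨u, v, huv⟩ := h
  have hb : -u % f = -u - f * (-u / f) := Int.emod_def _ _
  have hb0 : 0 ≤ -u % f := Int.emod_nonneg _ hf.ne'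
  have hbf : -u % f < f := Int.emod_lt_of_pos _ hf
  have hdet : (v - (-u / f) * e) * f - (-u % f) * e = 1 := by
    rw [hb]; linear_combination huv
  exact ⟨_, _, hdet, by nlinarith, by nlinarith, hb0, hbf⟩

lemma exists_farey_parents {e f : ℤ} (h : IsCoprime e f) (hef : 2 < e.natAbs + f.natAbs) :
    ∃ a b c d : ℤ, a * d - b * c = 1 ∧ a + c = e ∧ b + d = f ∧
      a.natAbs + b.natAbs < e.natAbs + f.natAbs ∧
      c.natAbs + d.natAbs < e.natAbs + f.natAbs ∧
      (a - c).natAbs + (b - d).natAbs < e.natAbs + f.natAbs := by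
  wlog hf : 0 < f generalizing e f
  · rcases (not_lt.mp hf).lt_or_eq with hf | rfl
    · obtain ⟨a, b, c, d, hdet, hac, hbd, h1, h2, h3⟩ := this h.neg_neg (by simpa using hef)
        (by omega)
      exact ⟨-a, -b, -c, -d, by linarith, by omega, by omega, by omega, by omega, by omega⟩
    · have := Int.isUnit_iff_natAbs_eq.mp (isCoprime_zero_right.mp h)
      omega
  wlog he : 0 < e generalizing e
  · rcases (not_lt.mp he).lt_or_eq with he | rfl
    · obtain ⟨a, b, c, d, hdet, hac, hbd, h1, h2, h3⟩ := this h.neg_left (by simpa using hef)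
        (by omega)
      exact ⟨-c, d, -a, b, by linarith, by omega, by omega, by omega, by omega, by omega⟩
    · have := Int.isUnit_iff_natAbs_eq.mp (isCoprime_zero_left.mp h)
      omega
  wlog hfe : f < e generalizing e f
  · rcases (not_lt.mp hfe).lt_or_eq with hef' | rfl
    · obtain ⟨a, b, c, d, hdet, hac, hbd, h1, h2, h3⟩ := this he h.symm (by omega) hf hef'
      exact ⟨d, c, b, a, by linarith, by omega, by omega, by omega, by omega, by omega⟩
    · have := Int.isUnit_iff_natAbs_eq.mp (isCoprime_self.mp h)
      omega
  obtain ⟨a, b, hdet, ha, hae, hb, hbf⟩ := exists_mul_sub_mul_eq_one_of_lt hf hfe h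
  exact ⟨a, b, e - a, f - b, by linarith, by ring, by ring, by omega, by omega, by omega⟩

lemma natAbs_le_one_of_isCoprime {e f : ℤ} (h : IsCoprime e f)
    (hef : e.natAbs + f.natAbs ≤ 2) : e.natAbs ≤ 1 ∧ f.natAbs ≤ 1 := by
  constructor <;> by_contra! hlt
  · obtain rfl : f = 0 := by omega
    have := Int.isUnit_iff_natAbs_eq.mp (isCoprime_zero_right.mp h)
    omega
  · obtain rfl : e = 0 := by omega
    have := Int.isUnit_iff_natAbs_eq.mp (isCoprime_zero_left.mp h)
    omega

section FixedTriangle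

variable {ψ : P1Q → P1Q} (hs : FareySimplicial Set.univ ψ) (hl : FareyLocallyInjective Set.univ ψ)
  (h10 : ψ (fareyMk 1 0) = fareyMk 1 0) (h01 : ψ (fareyMk 0 1) = fareyMk 0 1)
  (h11 : ψ (fareyMk 1 1) = fareyMk 1 1)
include hs hl h10 h01 h11

lemma apply_fareyMk_eq_self_of_natAbs_add_natAbs_le_two {e f : ℤ} (hef : IsCoprime e f)
    (hsmall : e.natAbs + f.natAbs ≤ 2) : ψ (fareyMk e f) = fareyMk e f := by
  have h1m : ψ (fareyMk (-1) 1) = fareyMk (-1) 1 := by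
    simpa using apply_fareyMk_add_eq_self hs hl (a := 0) (b := 1) (c := -1) (d := 0) (by norm_num)
      h01 (by rw [← fareyMk_neg]; simpa using h10) (by simpa using h11)
  obtain ⟨he, hf⟩ := natAbs_le_one_of_isCoprime hef hsmall
  obtain rfl | rfl | rfl : e = -1 ∨ e = 0 ∨ e = 1 := by omega
  all_goals obtain rfl | rfl | rfl : f = -1 ∨ f = 0 ∨ f = 1 := by omega
  all_goals
    first
    | assumption
    | simp at hef
    | (rw [← fareyMk_neg]; simpa using ‹_›)

lemma eq_self_of_fixes_base_triangle (x : P1Q) : ψ x = x := by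
  obtain ⟨e, f, hef, rfl⟩ := exists_fareyMk_eq x
  induction hn : e.natAbs + f.natAbs using Nat.strong_induction_on generalizing e f with
  | _ n ih =>
  by_cases hsmall : e.natAbs + f.natAbs ≤ 2
  · exact apply_fareyMk_eq_self_of_natAbs_add_natAbs_le_two hs hl h10 h01 h11 hef hsmall
  obtain ⟨a, b, c, d, hdet, rfl, rfl, h1, h2, h3⟩ := exists_farey_parents hef (by omega)
  exact apply_fareyMk_add_eq_self hs hl hdet (ih _ (hn ▸ h1) a b (isCoprime_of_det_eq_one hdet) rfl)
    (ih _ (hn ▸ h2) c d (isCoprime_of_det_eq_one (d := -b) (c := -a) (by linarith)) rfl)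
    (ih _ (hn ▸ h3) (a - c) (b - d) (isCoprime_of_det_eq_one (d := d) (c := c) (by linarith)) rfl)

end FixedTriangle

lemma eq_fareyAct_of_eqOn_base_triangle {φ : P1Q → P1Q} (hs : FareySimplicial Set.univ φ)
    (hl : FareyLocallyInjective Set.univ φ) {g : GL (Fin 2) ℤ}
    (h10 : φ (fareyMk 1 0) = fareyAct g (fareyMk 1 0))
    (h01 : φ (fareyMk 0 1) = fareyAct g (fareyMk 0 1))
    (h11 : φ (fareyMk 1 1) = fareyAct g (fareyMk 1 1)) (x : P1Q) : φ x = fareyAct g x := by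
  have hψ := eq_self_of_fixes_base_triangle (hs.fareyAct_comp g⁻¹) (hl.fareyAct_comp g⁻¹)
    (by simp [h10, fareyAct_inv_fareyAct]) (by simp [h01, fareyAct_inv_fareyAct])
    (by simp [h11, fareyAct_inv_fareyAct]) x
  simpa [fareyAct_fareyAct_inv] using congrArg (fareyAct g) hψ

/-- Corollary 1.2 for the Farey complex: every locally injective
simplicial self-map of the Farey graph is induced by an element of `GL(2,ℤ)`,
unique up to sign. -/
theorem farey_simplicial_rigidity :
    ∀ φ : P1Q → P1Q,
      FareySimplicial Set.univ φ → FareyLocallyInjective Set.univ φ →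
      ∃ g : GL (Fin 2) ℤ,
        (∀ x : P1Q, φ x = fareyAct g x) ∧
        ∀ g' : GL (Fin 2) ℤ, (∀ x : P1Q, φ x = fareyAct g' x) → g' = g ∨ g' = -g := by
  intro φ hs hl
  have adj : ∀ {a b c d : ℤ}, |a * d - b * c| = 1 →
      fareyGraph.Adj (φ (fareyMk a b)) (φ (fareyMk c d)) :=
    fun h => hs _ trivial _ trivial (fareyGraph_adj_fareyMk h)
  obtain ⟨g, h10, h01, h11⟩ := exists_fareyAct_eq_of_isTriangle
    (adj (a := 1) (b := 0) (c := 0) (d := 1) (by norm_num))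
    (adj (a := 1) (b := 0) (c := 1) (d := 1) (by norm_num))
    (adj (a := 0) (b := 1) (c := 1) (d := 1) (by norm_num))
  have hg := eq_fareyAct_of_eqOn_base_triangle hs hl h10.symm h01.symm h11.symm
  exact ⟨g, hg, fun g' hg' => eq_or_eq_neg_of_fareyAct_eq fun x => (hg' x).symm.trans (hg x)⟩
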